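/- arXiv:2002.11311 — 5 statements merged into one kernel-verified Lean document; each statement's English description precedes it below -/
import Mathlib

section
/- Let n, m be natural numbers, let ν : Fin (2m+1) → ℝⁿ index vectors ν_{-m},…,ν_m with ν_{-ℓ} = -ν_ℓ, let R_{-m},…,R_m be nonnegative real numbers, let A ∈ ℝⁿ, let D be a symmetric positive semidefinite n×n real matrix, and let p ∈ ℝⁿ. If A·p + pᵀDp + Σ_{ℓ=-m}^{m} R_ℓ (exp(ν_ℓ·p) − 1) = 0, then (A + Σ_{ℓ=-m}^{m} ν_ℓ R_ℓ)·p ≤ 0. -/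
/-!
The Hamiltonian `H(p) = A·p + pᵀDp + Σ_ℓ R_ℓ (exp(ν_ℓ·p) − 1)` dominates its linearisation
`F·p` at `p = 0`: the quadratic term is nonnegative and `exp x − 1 ≥ x` is weighted by
nonnegative rates. Hence `H(p) = 0` forces `F·p ≤ 0`.
-/

open Matrix Finset

theorem sum_mul_le_sum_mul_exp_sub_one {ι : Type*} (s : Finset ι) (R x : ι → ℝ)
    (hR : ∀ i ∈ s, 0 ≤ R i) :
    ∑ i ∈ s, R i * x i ≤ ∑ i ∈ s, R i * (Real.exp (x i) - 1) :=
  sum_le_sum fun i hi =>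
    mul_le_mul_of_nonneg_left (by linarith [Real.add_one_le_exp (x i)]) (hR i hi)

theorem dotProduct_le_hamiltonian {n ι : Type*} [Fintype n] (s : Finset ι)
    (ν : ι → n → ℝ) (R : ι → ℝ) (hR : ∀ i ∈ s, 0 ≤ R i) (A : n → ℝ)
    {D : Matrix n n ℝ} (hD : D.PosSemidef) (p : n → ℝ) :
    (A + ∑ i ∈ s, R i • ν i) ⬝ᵥ p
      ≤ A ⬝ᵥ p + p ⬝ᵥ D *ᵥ p + ∑ i ∈ s, R i * (Real.exp (ν i ⬝ᵥ p) - 1) := by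
  have hquad : 0 ≤ p ⬝ᵥ D *ᵥ p := by simpa using hD.dotProduct_mulVec_nonneg p
  have hjump := sum_mul_le_sum_mul_exp_sub_one s R (fun i => ν i ⬝ᵥ p) hR
  simp only [add_dotProduct, sum_dotProduct, smul_dotProduct, smul_eq_mul] at hjump ⊢
  linarith

theorem stmt_0_general (n m : ℕ) (ν : ℤ → Fin n → ℝ)
    (R : ℤ → ℝ) (hR : ∀ ℓ ∈ Finset.Icc (-(m : ℤ)) (m : ℤ), 0 ≤ R ℓ)
    (A : Fin n → ℝ) (D : Matrix (Fin n) (Fin n) ℝ)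
    (hDpos : D.PosSemidef)
    (p : Fin n → ℝ)
    (h : A ⬝ᵥ p + p ⬝ᵥ D.mulVec p
        + ∑ ℓ ∈ Finset.Icc (-(m : ℤ)) (m : ℤ), R ℓ * (Real.exp (ν ℓ ⬝ᵥ p) - 1) = 0) :
    (A + ∑ ℓ ∈ Finset.Icc (-(m : ℤ)) (m : ℤ), R ℓ • ν ℓ) ⬝ᵥ p ≤ 0 :=
  h ▸ dotProduct_le_hamiltonian _ ν R hR A hDpos p

theorem stmt_0 (n m : ℕ) (ν : ℤ → Fin n → ℝ)
    (hν : ∀ ℓ ∈ Finset.Icc (-(m : ℤ)) (m : ℤ), ν (-ℓ) = -ν ℓ)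
    (R : ℤ → ℝ) (hR : ∀ ℓ ∈ Finset.Icc (-(m : ℤ)) (m : ℤ), 0 ≤ R ℓ)
    (A : Fin n → ℝ) (D : Matrix (Fin n) (Fin n) ℝ)
    (hDsymm : D.IsSymm) (hDpos : D.PosSemidef)
    (p : Fin n → ℝ)
    (h : A ⬝ᵥ p + p ⬝ᵥ D.mulVec p
        + ∑ ℓ ∈ Finset.Icc (-(m : ℤ)) (m : ℤ), R ℓ * (Real.exp (ν ℓ ⬝ᵥ p) - 1) = 0) :
    (A + ∑ ℓ ∈ Finset.Icc (-(m : ℤ)) (m : ℤ), R ℓ • ν ℓ) ⬝ᵥ p ≤ 0 :=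
  stmt_0_general n m ν R hR A D hDpos p h
end

section
/- Let n, m be natural numbers, ν_{-m},…,ν_m ∈ ℝⁿ with ν_{-ℓ} = -ν_ℓ, and let A : ℝⁿ → ℝⁿ, R_ℓ : ℝⁿ → [0,∞) for each ℓ, and D : ℝⁿ → (symmetric positive semidefinite n×n matrices) be given. Let F(x) = A(x) + Σ_{ℓ=-m}^{m} ν_ℓ R_ℓ(x). Suppose φ : ℝⁿ → ℝ is differentiable and satisfies the stationary Hamilton–Jacobi equation A(x)·∇φ(x) + ∇φ(x)ᵀD(x)∇φ(x) + Σ_{ℓ=-m}^{m} R_ℓ(x)(exp(ν_ℓ·∇φ(x)) − 1) = 0 for all x ∈ ℝⁿ. If y : ℝ → ℝⁿ is differentiable and satisfies y'(t) = F(y(t)) for all t, then the function t ↦ φ(y(t)) has nonpositive derivative at every t; in particular it is monotone nonincreasing. -/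
open Matrix Finset
open scoped RealInnerProductSpace

/-!
Along a solution of `y' = F y` the chain rule gives `(φ ∘ y)' = ⟪∇φ, F⟫`. Inserting `A` from the
Hamilton–Jacobi equation, `⟪∇φ, F⟫` differs from its left-hand side by the diffusion term
`⟪∇φ, D ∇φ⟫ ≥ 0` and by the jump terms `R_ℓ (exp ⟪ν_ℓ, ∇φ⟫ - 1 - ⟪ν_ℓ, ∇φ⟫) ≥ 0`, which are
nonnegative because `R_ℓ ≥ 0` and `exp` lies above its tangent line `1 + x`.
-/

theorem HasGradientAt.hasDerivAt_comp {E : Type*} [NormedAddCommGroup E] [InnerProductSpace ℝ E]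
    [CompleteSpace E] {f : E → ℝ} {g : E} {y : ℝ → E} {y' : E} {t : ℝ}
    (hf : HasGradientAt f g (y t)) (hy : HasDerivAt y y' t) :
    HasDerivAt (fun s => f (y s)) ⟪g, y'⟫ t := by
  simpa [Function.comp_def] using hf.hasFDerivAt.comp_hasDerivAt t hy

theorem mul_inner_le_mul_exp_inner_sub_one {E : Type*} [NormedAddCommGroup E]
    [InnerProductSpace ℝ E] {r : ℝ} (hr : 0 ≤ r) (p v : E) :
    r * ⟪p, v⟫ ≤ r * (Real.exp ⟪v, p⟫ - 1) := by
  rw [real_inner_comm]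
  gcongr
  linarith [Real.add_one_le_exp ⟪v, p⟫]

theorem inner_add_sum_smul_le {E ι : Type*} [NormedAddCommGroup E] [InnerProductSpace ℝ E]
    (s : Finset ι) (p a : E) {q : ℝ} (hq : 0 ≤ q) {r : ι → ℝ} (hr : ∀ i ∈ s, 0 ≤ r i)
    (v : ι → E) :
    ⟪p, a + ∑ i ∈ s, r i • v i⟫ ≤ ⟪a, p⟫ + q + ∑ i ∈ s, r i * (Real.exp ⟪v i, p⟫ - 1) := by
  have hjumps : ∑ i ∈ s, r i * ⟪p, v i⟫ ≤ ∑ i ∈ s, r i * (Real.exp ⟪v i, p⟫ - 1) :=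
    sum_le_sum fun i hi => mul_inner_le_mul_exp_inner_sub_one (hr i hi) p (v i)
  simp only [inner_add_right, inner_sum, real_inner_smul_right, real_inner_comm a p]
  linarith

theorem stmt_1_general (n m : ℕ) (ν : ℤ → EuclideanSpace ℝ (Fin n))
    (A : EuclideanSpace ℝ (Fin n) → EuclideanSpace ℝ (Fin n))
    (R : ℤ → EuclideanSpace ℝ (Fin n) → ℝ)
    (hR : ∀ ℓ ∈ Finset.Icc (-(m : ℤ)) (m : ℤ), ∀ x, 0 ≤ R ℓ x)
    (D : EuclideanSpace ℝ (Fin n) → Matrix (Fin n) (Fin n) ℝ)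
    (hDpos : ∀ x, (D x).PosSemidef)
    (F : EuclideanSpace ℝ (Fin n) → EuclideanSpace ℝ (Fin n))
    (hF : ∀ x, F x = A x + ∑ ℓ ∈ Finset.Icc (-(m : ℤ)) (m : ℤ), R ℓ x • ν ℓ)
    (φ : EuclideanSpace ℝ (Fin n) → ℝ)
    (hφ : Differentiable ℝ φ)
    (hHJ : ∀ x, ⟪A x, gradient φ x⟫
        + ⟪gradient φ x, Matrix.toEuclideanLin (D x) (gradient φ x)⟫
        + ∑ ℓ ∈ Finset.Icc (-(m : ℤ)) (m : ℤ),
            R ℓ x * (Real.exp ⟪ν ℓ, gradient φ x⟫ - 1) = 0)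
    (y : ℝ → EuclideanSpace ℝ (Fin n))
    (hy : ∀ t, HasDerivAt y (F (y t)) t) :
    (∀ t, deriv (fun s => φ (y s)) t ≤ 0) ∧ Antitone (fun t => φ (y t)) := by
  have hderiv t : HasDerivAt (fun s => φ (y s)) ⟪gradient φ (y t), F (y t)⟫ t :=
    (hφ (y t)).hasGradientAt.hasDerivAt_comp (hy t)
  have hnonpos t : ⟪gradient φ (y t), F (y t)⟫ ≤ 0 := by
    have hdiffusion := (isPositive_toEuclideanLin_iff.mpr (hDpos (y t))).inner_nonneg_right
      (gradient φ (y t))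
    rw [hF, ← hHJ (y t)]
    exact inner_add_sum_smul_le _ _ _ hdiffusion (fun ℓ hℓ => hR ℓ hℓ (y t)) ν
  have hderiv_nonpos t : deriv (fun s => φ (y s)) t ≤ 0 := (hderiv t).deriv ▸ hnonpos t
  exact ⟨hderiv_nonpos,
    antitone_of_deriv_nonpos (fun t => (hderiv t).differentiableAt) hderiv_nonpos⟩

theorem stmt_1 (n m : ℕ) (ν : ℤ → EuclideanSpace ℝ (Fin n))
    (hν : ∀ ℓ ∈ Finset.Icc (-(m : ℤ)) (m : ℤ), ν (-ℓ) = -ν ℓ)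
    (A : EuclideanSpace ℝ (Fin n) → EuclideanSpace ℝ (Fin n))
    (R : ℤ → EuclideanSpace ℝ (Fin n) → ℝ)
    (hR : ∀ ℓ ∈ Finset.Icc (-(m : ℤ)) (m : ℤ), ∀ x, 0 ≤ R ℓ x)
    (D : EuclideanSpace ℝ (Fin n) → Matrix (Fin n) (Fin n) ℝ)
    (hDsymm : ∀ x, (D x).IsSymm) (hDpos : ∀ x, (D x).PosSemidef)
    (F : EuclideanSpace ℝ (Fin n) → EuclideanSpace ℝ (Fin n))
    (hF : ∀ x, F x = A x + ∑ ℓ ∈ Finset.Icc (-(m : ℤ)) (m : ℤ), R ℓ x • ν ℓ)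
    (φ : EuclideanSpace ℝ (Fin n) → ℝ)
    (hφ : Differentiable ℝ φ)
    (hHJ : ∀ x, ⟪A x, gradient φ x⟫
        + ⟪gradient φ x, Matrix.toEuclideanLin (D x) (gradient φ x)⟫
        + ∑ ℓ ∈ Finset.Icc (-(m : ℤ)) (m : ℤ),
            R ℓ x * (Real.exp ⟪ν ℓ, gradient φ x⟫ - 1) = 0)
    (y : ℝ → EuclideanSpace ℝ (Fin n))
    (hy : ∀ t, HasDerivAt y (F (y t)) t) :
    (∀ t, deriv (fun s => φ (y s)) t ≤ 0) ∧ Antitone (fun t => φ (y t)) :=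
  stmt_1_general n m ν A R hR D hDpos F hF φ hφ hHJ y hy
end

section
/- Let S be a finite set, let q : S × S → ℝ be nonnegative, and let p : S → (ℝ → (0,∞)) be a family of differentiable positive functions satisfying the master equation d p_i(t)/dt = Σ_{j∈S} (p_j(t) q(j,i) − p_i(t) q(i,j)) for all i ∈ S and t ∈ ℝ. Then for each i and t, the local entropy s_i(t) = −p_i(t) ln p_i(t) satisfies d s_i(t)/dt = (1/2) Σ_{j∈S} (p_i q(i,j) − p_j q(j,i)) ln(p_i/p_j) + (1/2) Σ_{j∈S} (p_i q(i,j) − p_j q(j,i)) (ln(p_i p_j) + 2), where all p's are evaluated at t. -/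
/-!
Both sums share the factor `p_i q(i,j) − p_j q(j,i)`, and since
`½ ln(p_i/p_j) + ½ (ln(p_i p_j) + 2) = ln p_i + 1`, the right-hand side collapses to
`(Σ_j (p_i q(i,j) − p_j q(j,i))) (ln p_i + 1)`. By the master equation this is
`−ṗ_i (ln p_i + 1)`, which is the chain rule for `−p ln p`.
-/

open Finset Real

theorem hasDerivAt_neg_mul_log {f : ℝ → ℝ} {f' t : ℝ} (hf : HasDerivAt f f' t)
    (ht : f t ≠ 0) :
    HasDerivAt (fun τ => -(f τ * log (f τ))) (-(f' * (log (f t) + 1))) t := by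
  have h := (hf.mul (hf.log ht)).neg
  rwa [mul_div_cancel₀ f' ht, ← mul_add_one] at h

theorem half_log_div_add_half_log_mul_add_two {a b : ℝ} (ha : a ≠ 0) (hb : b ≠ 0) :
    1 / 2 * log (a / b) + 1 / 2 * (log (a * b) + 2) = log a + 1 := by
  rw [log_div ha hb, log_mul ha hb]
  ring

theorem half_sum_mul_log_div_add_half_sum_mul_log_mul {ι : Type*} (s : Finset ι) (J b : ι → ℝ)
    {a : ℝ} (ha : a ≠ 0) (hb : ∀ j ∈ s, b j ≠ 0) :
    1 / 2 * ∑ j ∈ s, J j * log (a / b j) + 1 / 2 * ∑ j ∈ s, J j * (log (a * b j) + 2)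
      = (∑ j ∈ s, J j) * (log a + 1) := by
  rw [mul_sum, mul_sum, ← sum_add_distrib, sum_mul]
  refine sum_congr rfl fun j hj => ?_
  rw [← half_log_div_add_half_log_mul_add_two ha (hb j hj)]
  ring

theorem stmt_6_general (S : Type*) [Fintype S] (q : S → S → ℝ)
    (p : S → ℝ → ℝ) (hp : ∀ i t, 0 < p i t)
    (hmaster : ∀ i t, HasDerivAt (p i) (∑ j, (p j t * q j i - p i t * q i j)) t)
    (i : S) (t : ℝ) :
    HasDerivAt (fun τ => -(p i τ * Real.log (p i τ)))
      ((1 / 2) * ∑ j, (p i t * q i j - p j t * q j i) * Real.log (p i t / p j t)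
        + (1 / 2) * ∑ j, (p i t * q i j - p j t * q j i) * (Real.log (p i t * p j t) + 2))
      t := by
  rw [half_sum_mul_log_div_add_half_sum_mul_log_mul _ _ _ (hp i t).ne' fun j _ => (hp j t).ne']
  convert hasDerivAt_neg_mul_log (hmaster i t) (hp i t).ne' using 1
  rw [← neg_mul, ← sum_neg_distrib]
  simp only [neg_sub]

theorem stmt_6 (S : Type*) [Fintype S] (q : S → S → ℝ) (hq : ∀ i j, 0 ≤ q i j)
    (p : S → ℝ → ℝ) (hp : ∀ i t, 0 < p i t)
    (hmaster : ∀ i t, HasDerivAt (p i) (∑ j, (p j t * q j i - p i t * q i j)) t)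
    (i : S) (t : ℝ) :
    HasDerivAt (fun τ => -(p i τ * Real.log (p i τ)))
      ((1 / 2) * ∑ j, (p i t * q i j - p j t * q j i) * Real.log (p i t / p j t)
        + (1 / 2) * ∑ j, (p i t * q i j - p j t * q j i) * (Real.log (p i t * p j t) + 2))
      t :=
  stmt_6_general S q p hp hmaster i t
end

section
/- Let q_ij and q_ji be strictly positive real numbers. Then the following are equivalent: (a) for all p_i, p_j > 0 with p_i q_ij ≠ p_j q_ji, the quotient (ln p_i − ln p_j)/(p_i q_ij − p_j q_ji) is strictly positive; (b) q_ij = q_ji. -/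
/-! With equal rates the quotient is the slope of the strictly increasing function `log`
divided by the rate, hence positive. With unequal rates, `p_i = p_j = 1` gives a nonzero
flux but a vanishing affinity, so the quotient is `0`. -/

open Real

lemma Real.log_sub_log_div_sub_pos {a b : ℝ} (ha : 0 < a) (hb : 0 < b) (hab : a ≠ b) :
    0 < (log a - log b) / (a - b) := by
  rcases hab.lt_or_gt with hlt | hgt
  · exact div_pos_of_neg_of_neg (sub_neg.mpr (log_lt_log ha hlt)) (sub_neg.mpr hlt)
  · exact div_pos (sub_pos.mpr (log_lt_log hb hgt)) (sub_pos.mpr hgt)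

theorem stmt_7_general (qij qji : ℝ) (hqij : 0 < qij) :
    (∀ pi pj : ℝ, 0 < pi → 0 < pj → pi * qij ≠ pj * qji →
      0 < (Real.log pi - Real.log pj) / (pi * qij - pj * qji)) ↔ qij = qji := by
  constructor
  · intro hpos
    by_contra hne
    simpa using hpos 1 1 one_pos one_pos (by simpa using hne)
  · rintro rfl pi pj hpi hpj hflux
    have hne : pi ≠ pj := fun h => hflux (by rw [h])
    rw [← sub_mul, ← div_div]
    exact div_pos (log_sub_log_div_sub_pos hpi hpj hne) hqij

theorem stmt_7 (qij qji : ℝ) (hqij : 0 < qij) (hqji : 0 < qji) :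
    (∀ pi pj : ℝ, 0 < pi → 0 < pj → pi * qij ≠ pj * qji →
      0 < (Real.log pi - Real.log pj) / (pi * qij - pj * qji)) ↔ qij = qji :=
  stmt_7_general qij qji hqij
end

section
/- Let n, m be natural numbers. For each reaction ℓ ∈ {1,…,m}, let α_ℓ, β_ℓ : Fin n → ℕ be the reactant and product complexes and k_ℓ > 0 the rate constant, and for z : Fin n → (0,∞) define the mass-action rate R_ℓ(z) = k_ℓ · Π_{i} z_i^{α_ℓ(i)}. Let z^ss : Fin n → (0,∞) be complex balanced, i.e. for every function η : Fin n → ℕ one has Σ_{ℓ : β_ℓ = η} k_ℓ Π_i (z^ss_i)^{α_ℓ(i)} = Σ_{ℓ : α_ℓ = η} k_ℓ Π_i (z^ss_i)^{α_ℓ(i)}. Then for every z : Fin n → (0,∞), Σ_{ℓ=1}^{m} R_ℓ(z) · ( exp( Σ_i (β_ℓ(i) − α_ℓ(i)) · ln(z_i / z^ss_i) ) − 1 ) = 0. -/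
/-!
Write `w = z / zˢˢ`. Each summand factors as `cₗ (w^{βₗ} - w^{αₗ})` with `cₗ = kₗ (zˢˢ)^{αₗ}`, so
the sum is `∑_η (∑_{βₗ = η} cₗ - ∑_{αₗ = η} cₗ) w^η`, and complex balance makes every coefficient
vanish.
-/

open Finset

section Fibers

variable {ι κ R : Type*} [Fintype ι] [DecidableEq κ] [CommSemiring R]

theorem sum_mul_comp_eq_sum_fiberwise {s : Finset κ} {g : ι → κ} (hg : ∀ ℓ, g ℓ ∈ s)
    (c : ι → R) (f : κ → R) :
    ∑ ℓ, c ℓ * f (g ℓ) = ∑ η ∈ s, (∑ ℓ with g ℓ = η, c ℓ) * f η := by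
  rw [← sum_fiberwise_of_maps_to (fun ℓ _ => hg ℓ)]
  refine sum_congr rfl fun η _ => ?_
  rw [sum_mul]
  exact sum_congr rfl fun ℓ hℓ => by rw [(mem_filter.mp hℓ).2]

theorem sum_mul_comp_eq_of_fiberwise_balanced {α β : ι → κ} {c : ι → R}
    (hbal : ∀ η, ∑ ℓ with β ℓ = η, c ℓ = ∑ ℓ with α ℓ = η, c ℓ) (f : κ → R) :
    ∑ ℓ, c ℓ * f (β ℓ) = ∑ ℓ, c ℓ * f (α ℓ) := by
  have hβ : ∀ ℓ, β ℓ ∈ univ.image β ∪ univ.image α := fun ℓ => by simp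
  have hα : ∀ ℓ, α ℓ ∈ univ.image β ∪ univ.image α := fun ℓ => by simp
  rw [sum_mul_comp_eq_sum_fiberwise hβ, sum_mul_comp_eq_sum_fiberwise hα]
  simp only [hbal]

end Fibers

section Monomials

variable {ι : Type*} [Fintype ι]

theorem Real.exp_sum_sub_mul_log {w : ι → ℝ} (hw : ∀ i, 0 < w i) (a b : ι → ℕ) :
    Real.exp (∑ i, ((b i : ℝ) - a i) * Real.log (w i)) =
      (∏ i, w i ^ b i) / ∏ i, w i ^ a i := by
  rw [Real.exp_sum, ← prod_div_distrib]
  refine prod_congr rfl fun i _ => ?_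
  rw [sub_mul, Real.exp_sub, ← Real.log_pow, ← Real.log_pow,
    Real.exp_log (pow_pos (hw i) _), Real.exp_log (pow_pos (hw i) _)]

theorem prod_pow_eq_prod_pow_mul_prod_div_pow {K : Type*} [Field K] (z y : ι → K)
    (hy : ∀ i, y i ≠ 0) (a : ι → ℕ) :
    ∏ i, z i ^ a i = (∏ i, y i ^ a i) * ∏ i, (z i / y i) ^ a i := by
  rw [← prod_mul_distrib]
  exact prod_congr rfl fun i _ => by rw [← mul_pow, mul_div_cancel₀ _ (hy i)]

theorem mul_prod_pow_mul_exp_sub_one {z zss : ι → ℝ} (hz : ∀ i, 0 < z i) (hzss : ∀ i, 0 < zss i)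
    (r : ℝ) (a b : ι → ℕ) :
    (r * ∏ i, z i ^ a i) *
        (Real.exp (∑ i, ((b i : ℝ) - a i) * Real.log (z i / zss i)) - 1) =
      (r * ∏ i, zss i ^ a i) * ∏ i, (z i / zss i) ^ b i -
        (r * ∏ i, zss i ^ a i) * ∏ i, (z i / zss i) ^ a i := by
  have hw : ∀ i, 0 < z i / zss i := fun i => div_pos (hz i) (hzss i)
  have hWa : (∏ i, (z i / zss i) ^ a i) ≠ 0 := (prod_pos fun i _ => pow_pos (hw i) _).ne'
  rw [Real.exp_sum_sub_mul_log hw,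
    prod_pow_eq_prod_pow_mul_prod_div_pow z zss (fun i => (hzss i).ne')]
  field_simp

end Monomials

theorem stmt_17_general (n m : ℕ) (α β : Fin m → Fin n → ℕ) (k : Fin m → ℝ)
    (zss : Fin n → ℝ) (hzss : ∀ i, 0 < zss i)
    (hcb : ∀ η : Fin n → ℕ,
      ∑ ℓ ∈ Finset.univ.filter (fun ℓ => β ℓ = η), k ℓ * ∏ i, zss i ^ α ℓ i =
      ∑ ℓ ∈ Finset.univ.filter (fun ℓ => α ℓ = η), k ℓ * ∏ i, zss i ^ α ℓ i)
    (z : Fin n → ℝ) (hz : ∀ i, 0 < z i) :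
    ∑ ℓ, (k ℓ * ∏ i, z i ^ α ℓ i) *
      (Real.exp (∑ i, ((β ℓ i : ℝ) - (α ℓ i : ℝ)) * Real.log (z i / zss i)) - 1) = 0 := by
  simp_rw [mul_prod_pow_mul_exp_sub_one hz hzss]
  rw [sum_sub_distrib, sub_eq_zero]
  exact sum_mul_comp_eq_of_fiberwise_balanced hcb fun η => ∏ i, (z i / zss i) ^ η i

theorem stmt_17 (n m : ℕ) (α β : Fin m → Fin n → ℕ) (k : Fin m → ℝ)
    (hk : ∀ ℓ, 0 < k ℓ) (zss : Fin n → ℝ) (hzss : ∀ i, 0 < zss i)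
    (hcb : ∀ η : Fin n → ℕ,
      ∑ ℓ ∈ Finset.univ.filter (fun ℓ => β ℓ = η), k ℓ * ∏ i, zss i ^ α ℓ i =
      ∑ ℓ ∈ Finset.univ.filter (fun ℓ => α ℓ = η), k ℓ * ∏ i, zss i ^ α ℓ i)
    (z : Fin n → ℝ) (hz : ∀ i, 0 < z i) :
    ∑ ℓ, (k ℓ * ∏ i, z i ^ α ℓ i) *
      (Real.exp (∑ i, ((β ℓ i : ℝ) - (α ℓ i : ℝ)) * Real.log (z i / zss i)) - 1) = 0 :=
  stmt_17_general n m α β k zss hzss hcb z hz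
end
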